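/- arXiv:2305.15364 — 2 statements merged into one kernel-verified Lean document; each statement's English description precedes it below -/
import Mathlib

section
/- Fix T > 0, constant real matrices A (n×n), B (n×m), symmetric Q (n×n), symmetric Q̂ (n×n), S (n×m), symmetric positive definite R (m×m), and vectors η ∈ ℝⁿ, ζ ∈ ℝᵐ, and assume Q̂ is positive semidefinite and Q − S R⁻¹ Sᵀ is positive semidefinite. For a continuous path x : [0,T] → ℝⁿ and u ∈ L²([0,T]; ℝᵐ), define Λ_T(x,u) = ½∫₀ᵀ(⟨Q x(s), x(s)⟩ + 2⟨S u(s), x(s)⟩ + ⟨R u(s), u(s)⟩ − 2⟨η, x(s)⟩ − 2⟨ζ, u(s)⟩) ds + ½⟨Q̂ x(T), x(T)⟩. Let λ ∈ (0,1), and let (x̃,ũ), (x̂,û) be two such path–control pairs. If the set {t ∈ [0,T] : ũ(t) + R⁻¹Sᵀ x̃(t) ≠ û(t) + R⁻¹Sᵀ x̂(t)} has positive Lebesgue measure, then λ Λ_T(x̃,ũ) + (1−λ) Λ_T(x̂,û) > Λ_T(λx̃ + (1−λ)x̂, λũ + (1−λ)û). -/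
/-!
Completing the square in the quadratic part `q(x, u) = ⟨Qx, x⟩ + 2⟨Su, x⟩ + ⟨Ru, u⟩` of the
running cost gives `q(x, u) = ⟨(Q - SR⁻¹Sᵀ)x, x⟩ + ⟨Rv, v⟩` with `v = u + R⁻¹Sᵀx` the reduced
control, so `q(x, u) ≥ ⟨Rv, v⟩`. Since the running and terminal costs are quadratic plus linear,
`λΛ_T(x̃, ũ) + (1 - λ)Λ_T(x̂, û) - Λ_T(λx̃ + (1 - λ)x̂, λũ + (1 - λ)û)` equals
`λ(1 - λ)/2 · (∫₀ᵀ q(x̃ - x̂, ũ - û) + ⟨Q̂(x̃ - x̂)(T), (x̃ - x̂)(T)⟩)`, and the integral is at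
least `∫₀ᵀ ⟨Rv, v⟩` for the difference `v` of the reduced controls, which is positive because
`R > 0` and `v ≠ 0` on a set of positive measure.
-/

open Matrix MeasureTheory intervalIntegral

/-- The risk-sensitive exponent `Λ_T(x,u)` of the paper (deterministic,
pathwise form). -/
noncomputable def LamT {n m : ℕ} (T : ℝ)
    (Q Qhat : Matrix (Fin n) (Fin n) ℝ) (S : Matrix (Fin n) (Fin m) ℝ)
    (R : Matrix (Fin m) (Fin m) ℝ) (η : Fin n → ℝ) (ζ : Fin m → ℝ)
    (x : ℝ → Fin n → ℝ) (u : ℝ → Fin m → ℝ) : ℝ :=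
  (1 / 2) * (∫ s in (0 : ℝ)..T,
      (Q.mulVec (x s) ⬝ᵥ x s + 2 * (S.mulVec (u s) ⬝ᵥ x s)
        + R.mulVec (u s) ⬝ᵥ u s - 2 * (η ⬝ᵥ x s) - 2 * (ζ ⬝ᵥ u s)))
    + (1 / 2) * (Qhat.mulVec (x T) ⬝ᵥ x T)

open Set

namespace Matrix

variable {ι κ : Type*} [Fintype ι] [Fintype κ]

lemma PosSemidef.mulVec_dotProduct_self_nonneg {M : Matrix ι ι ℝ} (hM : M.PosSemidef)
    (x : ι → ℝ) : 0 ≤ M *ᵥ x ⬝ᵥ x := by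
  simpa [dotProduct_comm] using hM.dotProduct_mulVec_nonneg x

lemma PosDef.mulVec_dotProduct_self_pos {M : Matrix ι ι ℝ} (hM : M.PosDef) {x : ι → ℝ}
    (hx : x ≠ 0) : 0 < M *ᵥ x ⬝ᵥ x := by
  simpa [dotProduct_comm] using hM.dotProduct_mulVec_pos hx

lemma transpose_mulVec_dotProduct (M : Matrix ι κ ℝ) (x : ι → ℝ) (v : κ → ℝ) :
    Mᵀ *ᵥ x ⬝ᵥ v = M *ᵥ v ⬝ᵥ x := by
  rw [mulVec_transpose, ← dotProduct_mulVec, dotProduct_comm]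

lemma mulVec_dotProduct_convexComb (M : Matrix ι κ ℝ) (t : ℝ) (a b : κ → ℝ) (c d : ι → ℝ) :
    M *ᵥ (t • a + (1 - t) • b) ⬝ᵥ (t • c + (1 - t) • d) =
      t * (M *ᵥ a ⬝ᵥ c) + (1 - t) * (M *ᵥ b ⬝ᵥ d) - t * (1 - t) * (M *ᵥ (a - b) ⬝ᵥ (c - d)) := by
  simp only [mulVec_add, mulVec_smul, mulVec_sub, add_dotProduct, smul_dotProduct,
    dotProduct_add, dotProduct_smul, sub_dotProduct, dotProduct_sub, smul_eq_mul]
  ring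

end Matrix

section Cost

variable {ι κ : Type*} [Fintype ι] [Fintype κ]

def runningCost (Q : Matrix ι ι ℝ) (S : Matrix ι κ ℝ) (R : Matrix κ κ ℝ) (η : ι → ℝ)
    (ζ : κ → ℝ) (x : ι → ℝ) (u : κ → ℝ) : ℝ :=
  Q *ᵥ x ⬝ᵥ x + 2 * (S *ᵥ u ⬝ᵥ x) + R *ᵥ u ⬝ᵥ u - 2 * (η ⬝ᵥ x) - 2 * (ζ ⬝ᵥ u)

noncomputable def reducedControl [DecidableEq κ] (S : Matrix ι κ ℝ) (R : Matrix κ κ ℝ)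
    (x : ι → ℝ) (u : κ → ℝ) : κ → ℝ :=
  u + (R⁻¹ * Sᵀ) *ᵥ x

variable {Q : Matrix ι ι ℝ} {S : Matrix ι κ ℝ} {R : Matrix κ κ ℝ}

lemma reducedControl_sub [DecidableEq κ] (x x' : ι → ℝ) (u u' : κ → ℝ) :
    reducedControl S R (x - x') (u - u') = reducedControl S R x u - reducedControl S R x' u' := by
  simp only [reducedControl, mulVec_sub]
  abel

lemma runningCost_convexComb (η : ι → ℝ) (ζ : κ → ℝ) (t : ℝ) (a b : ι → ℝ) (c d : κ → ℝ) :
    runningCost Q S R η ζ (t • a + (1 - t) • b) (t • c + (1 - t) • d) =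
      t * runningCost Q S R η ζ a c + (1 - t) * runningCost Q S R η ζ b d
        - t * (1 - t) * runningCost Q S R 0 0 (a - b) (c - d) := by
  simp only [runningCost, zero_dotProduct]
  rw [mulVec_dotProduct_convexComb, mulVec_dotProduct_convexComb, mulVec_dotProduct_convexComb]
  simp only [dotProduct_add, dotProduct_smul, smul_eq_mul]
  ring

lemma runningCost_zero_zero_eq_schur_add [DecidableEq κ] (hR : R.IsSymm) (hRdet : IsUnit R.det)
    (x : ι → ℝ) (u : κ → ℝ) :
    runningCost Q S R 0 0 x u = (Q - S * R⁻¹ * Sᵀ) *ᵥ x ⬝ᵥ x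
      + R *ᵥ reducedControl S R x u ⬝ᵥ reducedControl S R x u := by
  unfold runningCost reducedControl
  set w := (R⁻¹ * Sᵀ) *ᵥ x
  have hRw : R *ᵥ w = Sᵀ *ᵥ x := by
    rw [mulVec_mulVec, mul_nonsing_inv_cancel_left _ _ hRdet]
  have hsymm : ∀ v : κ → ℝ, R *ᵥ v ⬝ᵥ w = S *ᵥ v ⬝ᵥ x := fun v => by
    rw [← transpose_mulVec_dotProduct, hR.eq, hRw, transpose_mulVec_dotProduct]
  have hschur : (S * R⁻¹ * Sᵀ) *ᵥ x ⬝ᵥ x = R *ᵥ w ⬝ᵥ w := by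
    rw [hsymm, Matrix.mul_assoc, ← mulVec_mulVec]
  have hcross : R *ᵥ w ⬝ᵥ u = S *ᵥ u ⬝ᵥ x := by
    rw [hRw, transpose_mulVec_dotProduct]
  simp only [zero_dotProduct, sub_mulVec, sub_dotProduct, hschur, mulVec_add, add_dotProduct,
    dotProduct_add, hsymm, hcross]
  ring

lemma mulVec_reducedControl_dotProduct_le_runningCost [DecidableEq κ] (hR : R.PosDef)
    (hQS : (Q - S * R⁻¹ * Sᵀ).PosSemidef) (x : ι → ℝ) (u : κ → ℝ) :
    R *ᵥ reducedControl S R x u ⬝ᵥ reducedControl S R x u ≤ runningCost Q S R 0 0 x u := by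
  rw [runningCost_zero_zero_eq_schur_add (isHermitian_iff_isSymm.mp hR.isHermitian)
    ((isUnit_iff_isUnit_det R).mp hR.isUnit)]
  exact le_add_of_nonneg_left (hQS.mulVec_dotProduct_self_nonneg x)

end Cost

section Integrability

variable {α ι κ : Type*} [Fintype ι] [Fintype κ] [MeasurableSpace α] {μ : Measure α}

lemma MeasureTheory.MemLp.mulVec {p : ENNReal} (M : Matrix ι κ ℝ) {f : α → κ → ℝ}
    (hf : MemLp f p μ) : MemLp (fun a => M *ᵥ f a) p μ :=
  (LinearMap.toContinuousLinearMap (mulVecLin M)).comp_memLp' hf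

lemma MeasureTheory.MemLp.integrable_dotProduct {f g : α → ι → ℝ} (hf : MemLp f 2 μ)
    (hg : MemLp g 2 μ) : Integrable (fun a => f a ⬝ᵥ g a) μ :=
  integrable_finsetSum _ fun i _ => (hf.eval i).integrable_mul (hg.eval i)

lemma MeasureTheory.MemLp.integrable_runningCost [IsFiniteMeasure μ] {x : α → ι → ℝ}
    {u : α → κ → ℝ} (hx : MemLp x 2 μ) (hu : MemLp u 2 μ) (Q : Matrix ι ι ℝ) (S : Matrix ι κ ℝ)
    (R : Matrix κ κ ℝ) (η : ι → ℝ) (ζ : κ → ℝ) :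
    Integrable (fun a => runningCost Q S R η ζ (x a) (u a)) μ :=
  ((((hx.mulVec Q).integrable_dotProduct hx).add
    (((hu.mulVec S).integrable_dotProduct hx).const_mul 2)).add
    ((hu.mulVec R).integrable_dotProduct hu)).sub
    (((memLp_const η).integrable_dotProduct hx).const_mul 2) |>.sub
    (((memLp_const ζ).integrable_dotProduct hu).const_mul 2)

lemma setIntegral_mulVec_dotProduct_self_pos {R : Matrix κ κ ℝ} (hR : R.PosDef) {s : Set α}
    {v : α → κ → ℝ} (hv : IntegrableOn (fun a => R *ᵥ v a ⬝ᵥ v a) s μ)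
    (hpos : 0 < μ {a ∈ s | v a ≠ 0}) :
    0 < ∫ a in s, R *ᵥ v a ⬝ᵥ v a ∂μ := by
  rw [setIntegral_pos_iff_support_of_nonneg_ae
    (ae_of_all _ fun a => hR.posSemidef.mulVec_dotProduct_self_nonneg (v a)) hv]
  refine hpos.trans_le (measure_mono ?_)
  rintro a ⟨has, hva⟩
  exact ⟨(hR.mulVec_dotProduct_self_pos hva).ne', has⟩

end Integrability

lemma ContinuousOn.memLp_top_restrict {X E : Type*} [TopologicalSpace X] [MeasurableSpace X]
    [OpensMeasurableSpace X] [NormedAddCommGroup E] {μ : Measure X} {K : Set X} {f : X → E}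
    (hf : ContinuousOn f K) (hK : IsCompact K) (hKm : MeasurableSet K) :
    MemLp f ⊤ (μ.restrict K) := by
  obtain ⟨C, hC⟩ := hK.exists_bound_of_continuousOn hf
  exact memLp_top_of_bound (hf.aestronglyMeasurable_of_isCompact hK hKm) C
    ((ae_restrict_iff' hKm).mpr (.of_forall hC))

section LamT

variable {n m : ℕ} {T : ℝ} {Q Qhat : Matrix (Fin n) (Fin n) ℝ} {S : Matrix (Fin n) (Fin m) ℝ}
  {R : Matrix (Fin m) (Fin m) ℝ} {η : Fin n → ℝ} {ζ : Fin m → ℝ}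

lemma LamT_eq_setIntegral (hT : 0 ≤ T) (x : ℝ → Fin n → ℝ) (u : ℝ → Fin m → ℝ) :
    LamT T Q Qhat S R η ζ x u = 1 / 2 * (∫ s in Icc 0 T, runningCost Q S R η ζ (x s) (u s))
      + 1 / 2 * (Qhat *ᵥ x T ⬝ᵥ x T) := by
  rw [LamT, integral_of_le hT, ← integral_Icc_eq_integral_Ioc]
  rfl

lemma convexComb_LamT_sub_LamT (hT : 0 ≤ T) (t : ℝ) {xt xh : ℝ → Fin n → ℝ}
    {ut uh : ℝ → Fin m → ℝ} (hxt : MemLp xt 2 (volume.restrict (Icc 0 T)))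
    (hxh : MemLp xh 2 (volume.restrict (Icc 0 T)))
    (hut : MemLp ut 2 (volume.restrict (Icc 0 T)))
    (huh : MemLp uh 2 (volume.restrict (Icc 0 T))) :
    t * LamT T Q Qhat S R η ζ xt ut + (1 - t) * LamT T Q Qhat S R η ζ xh uh
      - LamT T Q Qhat S R η ζ (fun s => t • xt s + (1 - t) • xh s)
          (fun s => t • ut s + (1 - t) • uh s)
      = t * (1 - t) / 2 * ((∫ s in Icc 0 T, runningCost Q S R 0 0 (xt s - xh s) (ut s - uh s))
          + Qhat *ᵥ (xt T - xh T) ⬝ᵥ (xt T - xh T)) := by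
  have hct := hxt.integrable_runningCost hut Q S R η ζ
  have hch := hxh.integrable_runningCost huh Q S R η ζ
  have hcd : Integrable (fun s => runningCost Q S R 0 0 (xt s - xh s) (ut s - uh s))
      (volume.restrict (Icc 0 T)) :=
    (hxt.sub hxh).integrable_runningCost (hut.sub huh) Q S R 0 0
  have hcomb : Integrable (fun s => t * runningCost Q S R η ζ (xt s) (ut s)
      + (1 - t) * runningCost Q S R η ζ (xh s) (uh s)) (volume.restrict (Icc 0 T)) :=
    (hct.const_mul t).add (hch.const_mul (1 - t))
  simp only [LamT_eq_setIntegral hT, runningCost_convexComb, mulVec_dotProduct_convexComb]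
  rw [integral_sub hcomb (hcd.const_mul _), integral_add (hct.const_mul t) (hch.const_mul _),
    MeasureTheory.integral_const_mul, MeasureTheory.integral_const_mul,
    MeasureTheory.integral_const_mul]
  ring

end LamT

theorem stmt5_general {n m : ℕ} (T : ℝ) (hT : 0 < T)
    (Q Qhat : Matrix (Fin n) (Fin n) ℝ) (S : Matrix (Fin n) (Fin m) ℝ)
    (R : Matrix (Fin m) (Fin m) ℝ)
    (hRpd : R.PosDef) (hQhat : Qhat.PosSemidef)
    (hQS : (Q - S * R⁻¹ * Sᵀ).PosSemidef)
    (η : Fin n → ℝ) (ζ : Fin m → ℝ)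
    (lam : ℝ) (hlam : lam ∈ Set.Ioo (0 : ℝ) 1)
    (xt xh : ℝ → Fin n → ℝ)
    (hxt : ContinuousOn xt (Set.Icc 0 T)) (hxh : ContinuousOn xh (Set.Icc 0 T))
    (ut uh : ℝ → Fin m → ℝ)
    (hut : MemLp ut 2 (volume.restrict (Set.Icc (0 : ℝ) T)))
    (huh : MemLp uh 2 (volume.restrict (Set.Icc (0 : ℝ) T)))
    (hdiff : 0 < volume {t ∈ Set.Icc (0 : ℝ) T |
      ut t + (R⁻¹ * Sᵀ).mulVec (xt t) ≠ uh t + (R⁻¹ * Sᵀ).mulVec (xh t)}) :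
    lam * LamT T Q Qhat S R η ζ xt ut + (1 - lam) * LamT T Q Qhat S R η ζ xh uh >
      LamT T Q Qhat S R η ζ
        (fun t => lam • xt t + (1 - lam) • xh t)
        (fun t => lam • ut t + (1 - lam) • uh t) := by
  obtain ⟨hlam0, hlam1⟩ := hlam
  have hxt2 : MemLp xt 2 (volume.restrict (Icc 0 T)) :=
    (hxt.memLp_top_restrict isCompact_Icc measurableSet_Icc).mono_exponent le_top
  have hxh2 : MemLp xh 2 (volume.restrict (Icc 0 T)) :=
    (hxh.memLp_top_restrict isCompact_Icc measurableSet_Icc).mono_exponent le_top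
  set v := fun s => reducedControl S R (xt s - xh s) (ut s - uh s)
  have hv2 : MemLp v 2 (volume.restrict (Icc 0 T)) :=
    (hut.sub huh).add ((hxt2.sub hxh2).mulVec _)
  have hv : IntegrableOn (fun s => R *ᵥ v s ⬝ᵥ v s) (Icc 0 T) :=
    (hv2.mulVec R).integrable_dotProduct hv2
  have hvne : {s ∈ Icc 0 T | v s ≠ 0} = {s ∈ Icc (0 : ℝ) T |
      ut s + (R⁻¹ * Sᵀ) *ᵥ xt s ≠ uh s + (R⁻¹ * Sᵀ) *ᵥ xh s} := by
    simp only [v, reducedControl_sub, sub_ne_zero]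
    rfl
  have hcost : 0 < ∫ s in Icc 0 T, runningCost Q S R 0 0 (xt s - xh s) (ut s - uh s) :=
    (setIntegral_mulVec_dotProduct_self_pos hRpd hv (hvne ▸ hdiff)).trans_le <|
      setIntegral_mono hv ((hxt2.sub hxh2).integrable_runningCost (hut.sub huh) ..)
        fun s => mulVec_reducedControl_dotProduct_le_runningCost hRpd hQS _ _
  rw [gt_iff_lt, ← sub_pos, convexComb_LamT_sub_LamT hT.le lam hxt2 hxh2 hut huh]
  exact mul_pos (div_pos (mul_pos hlam0 (sub_pos.mpr hlam1)) two_pos)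
    (add_pos_of_pos_of_nonneg hcost (hQhat.mulVec_dotProduct_self_nonneg _))

/-- pathwise strict convexity of `Λ_T` along two path–control
pairs whose reduced controls `u + R⁻¹Sᵀx` differ on a set of positive
Lebesgue measure, under Assumption 1 of the paper. -/
theorem stmt5 {n m : ℕ} (T : ℝ) (hT : 0 < T)
    (Q Qhat : Matrix (Fin n) (Fin n) ℝ) (S : Matrix (Fin n) (Fin m) ℝ)
    (R : Matrix (Fin m) (Fin m) ℝ)
    (hQsymm : Q.IsSymm) (hQhatsymm : Qhat.IsSymm) (hRsymm : R.IsSymm)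
    (hRpd : R.PosDef) (hQhat : Qhat.PosSemidef)
    (hQS : (Q - S * R⁻¹ * Sᵀ).PosSemidef)
    (η : Fin n → ℝ) (ζ : Fin m → ℝ)
    (lam : ℝ) (hlam : lam ∈ Set.Ioo (0 : ℝ) 1)
    (xt xh : ℝ → Fin n → ℝ)
    (hxt : ContinuousOn xt (Set.Icc 0 T)) (hxh : ContinuousOn xh (Set.Icc 0 T))
    (ut uh : ℝ → Fin m → ℝ)
    (hut : MemLp ut 2 (volume.restrict (Set.Icc (0 : ℝ) T)))
    (huh : MemLp uh 2 (volume.restrict (Set.Icc (0 : ℝ) T)))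
    (hdiff : 0 < volume {t ∈ Set.Icc (0 : ℝ) T |
      ut t + (R⁻¹ * Sᵀ).mulVec (xt t) ≠ uh t + (R⁻¹ * Sᵀ).mulVec (xh t)}) :
    lam * LamT T Q Qhat S R η ζ xt ut + (1 - lam) * LamT T Q Qhat S R η ζ xh uh >
      LamT T Q Qhat S R η ζ
        (fun t => lam • xt t + (1 - lam) • xh t)
        (fun t => lam • ut t + (1 - lam) • uh t) :=
  stmt5_general T hT Q Qhat S R hRpd hQhat hQS η ζ lam hlam xt xh hxt hxh ut uh hut huh hdiff
end

section
/- Let T > 0, δ > 0, let A, Q be constant n×n real matrices with Q symmetric, Q̂ a symmetric n×n matrix, B an n×m matrix, S an n×m matrix, R an invertible m×m matrix, and σ : [0,T] → ℝ^{n×r} continuous. Suppose Π : [0,T] → ℝ^{n×n} is continuously differentiable, satisfies Π(T) = Q̂ and the Riccati equation Π'(t) + Π(t)A + Aᵀ Π(t) − (Π(t)B + S) R⁻¹ (Bᵀ Π(t) + Sᵀ) + Q + δ Π(t) σ(t) σ(t)ᵀ Π(t) = 0 on [0,T]. Define Â(t) = A − B R⁻¹ (Sᵀ + Bᵀ Π(t))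 + δ σ(t) σ(t)ᵀ Π(t) and Q̃(t) = Q − S R⁻¹ (Sᵀ + Bᵀ Π(t)), let Υ be the fundamental matrix with Υ'(t) = Â(t)Υ(t), Υ(0) = I (so Υ(t) is invertible for all t), and set Z̃(t) = exp(−Aᵀ t) · (∫ₜᵀ exp(Aᵀ s) Q̃(s) Υ(s) ds + exp(Aᵀ T) Q̂ Υ(T)) · Υ(t)⁻¹. Then Z̃(t) = Π(t) for every t ∈ [0,T]. -/
open Matrix Set MeasureTheory intervalIntegral

attribute [local instance] Matrix.normedAddCommGroup Matrix.normedSpace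

/-! The Riccati equation for `Π` says exactly that `Π` solves the linear Sylvester equation
`Z' = -(AᵀZ + Q̃ + ZÂ)`. For any solution `Z` of it, `s ↦ exp(sAᵀ) Z(s) Υ(s)` has derivative
`-exp(sAᵀ) Q̃(s) Υ(s)`, so integrating from `t` to `T` recovers `Z(t)` as the variation-of-constants
expression defining `Z̃(t)`; here `Υ(t)` is invertible because a vector `c` with `Υ(t)c = 0` makes
`Υ(s)c` a solution of `y' = Ây` vanishing at `t`, hence everywhere by Grönwall uniqueness. -/

theorem sylvester_of_riccati {n m r α : Type*} [Fintype n] [Fintype m] [Fintype r] [CommRing α]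
    {A Q P P' : Matrix n n α} {B S : Matrix n m α} {K : Matrix m m α} {σ : Matrix n r α} {δ : α}
    (h : P' + P * A + Aᵀ * P - (P * B + S) * K * (Bᵀ * P + Sᵀ) + Q + δ • (P * σ * σᵀ * P) = 0) :
    P' = -(Aᵀ * P + (Q - S * K * (Sᵀ + Bᵀ * P))
      + P * (A - B * K * (Sᵀ + Bᵀ * P) + δ • (σ * σᵀ * P))) := by
  rw [← sub_eq_zero, ← h]
  simp only [Matrix.mul_add, Matrix.add_mul, Matrix.mul_sub, Matrix.mul_smul, Matrix.mul_assoc]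
  abel

section

variable {ι : Type*} [Fintype ι] [DecidableEq ι]

-- `HasDerivAt` only sees the topology, which the submultiplicative operator norm shares with the
-- ambient sup norm.
theorem Matrix.hasDerivAt_exp_smul_const (A : Matrix ι ι ℝ) (t : ℝ) :
    HasDerivAt (fun s : ℝ => NormedSpace.exp (s • A)) (NormedSpace.exp (t • A) * A) t :=
  open scoped Norms.Operator in _root_.hasDerivAt_exp_smul_const A t

theorem Matrix.exp_neg_smul_mul_exp_smul (A : Matrix ι ι ℝ) (t : ℝ) :
    NormedSpace.exp ((-t) • A) * NormedSpace.exp (t • A) = 1 := by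
  rw [neg_smul, Matrix.exp_neg]
  exact Matrix.nonsing_inv_mul _ ((Matrix.isUnit_iff_isUnit_det _).mp (Matrix.isUnit_exp _))

theorem HasDerivWithinAt.matrix_mul {f g : ℝ → Matrix ι ι ℝ} {f' g' : Matrix ι ι ℝ}
    {s : Set ℝ} {x : ℝ} (hf : HasDerivWithinAt f f' s x) (hg : HasDerivWithinAt g g' s x) :
    HasDerivWithinAt (fun t => f t * g t) (f' * g x + f x * g') s x :=
  open scoped Norms.Operator in hf.mul hg

noncomputable def Matrix.toCLM' : Matrix ι ι ℝ ≃L[ℝ] (ι → ℝ) →L[ℝ] (ι → ℝ) :=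
  (Matrix.toLin'.trans LinearMap.toContinuousLinearMap).toContinuousLinearEquiv

@[simp]
theorem Matrix.toCLM'_apply (M : Matrix ι ι ℝ) (v : ι → ℝ) : Matrix.toCLM' M v = M *ᵥ v := rfl

theorem eqOn_zero_of_hasDerivWithinAt_mulVec {a b : ℝ} {A : ℝ → Matrix ι ι ℝ} {y : ℝ → ι → ℝ}
    (hA : ContinuousOn A (Icc a b))
    (hy : ∀ s ∈ Icc a b, HasDerivWithinAt y (A s *ᵥ y s) (Icc a b) s) (hb : y b = 0) :
    EqOn y 0 (Icc a b) := by
  obtain ⟨C, hC⟩ := isCompact_Icc.exists_bound_of_continuousOn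
    (Matrix.toCLM'.continuous.comp_continuousOn hA)
  have hlip : ∀ s ∈ Ioc a b, LipschitzOnWith C.toNNReal (fun x => A s *ᵥ x) univ := by
    intro s hs
    refine ((Matrix.toCLM' (A s)).lipschitz.weaken ?_).lipschitzOnWith
    rw [← NNReal.coe_le_coe, coe_nnnorm]
    exact (hC s (Ioc_subset_Icc_self hs)).trans (Real.le_coe_toNNReal C)
  have hy_left : ∀ s ∈ Ioc a b, HasDerivWithinAt y (A s *ᵥ y s) (Iic s) s := fun s hs =>
    (hy s (Ioc_subset_Icc_self hs)).mono_of_mem_nhdsWithin (Icc_mem_nhdsLE_of_mem hs)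
  refine ODE_solution_unique_of_mem_Icc_left (v := fun s x => A s *ᵥ x) (s := fun _ => univ)
    hlip (fun s hs => (hy s hs).continuousWithinAt) hy_left (fun _ _ => mem_univ _)
    continuousOn_const (fun s _ => ?_) (fun _ _ => mem_univ _) hb
  simp only [Pi.zero_apply, mulVec_zero]
  exact hasDerivWithinAt_const s (Iic s) 0

theorem isUnit_of_hasDerivWithinAt_mul {a b t : ℝ} {A Y : ℝ → Matrix ι ι ℝ}
    (hA : ContinuousOn A (Icc a b))
    (hY : ∀ s ∈ Icc a b, HasDerivWithinAt Y (A s * Y s) (Icc a b) s) (ha : IsUnit (Y a))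
    (ht : t ∈ Icc a b) : IsUnit (Y t) := by
  have hsub : Icc a t ⊆ Icc a b := Icc_subset_Icc_right ht.2
  rw [← Matrix.mulVec_injective_iff_isUnit]
  intro c d hcd
  set v := c - d
  have hy : ∀ s ∈ Icc a t,
      HasDerivWithinAt (fun u => Y u *ᵥ v) (A s *ᵥ (Y s *ᵥ v)) (Icc a t) s := by
    intro s hs
    rw [mulVec_mulVec]
    exact ((ContinuousLinearMap.apply ℝ _ v).comp Matrix.toCLM'.toContinuousLinearMap).hasFDerivAt
      |>.comp_hasDerivWithinAt s ((hY s (hsub hs)).mono hsub)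
  have hya := eqOn_zero_of_hasDerivWithinAt_mulVec (hA.mono hsub) hy
    (by rw [mulVec_sub, hcd, sub_self]) (left_mem_Icc.mpr ht.1)
  exact sub_eq_zero.mp (Matrix.mulVec_injective_iff_isUnit.mpr ha (by simpa using hya))

theorem eq_of_hasDerivWithinAt_sylvester {a b t : ℝ} (A : Matrix ι ι ℝ)
    {Ahat Q Z Y : ℝ → Matrix ι ι ℝ} (hQ : ContinuousOn Q (Icc a b))
    (hZ : ∀ s ∈ Icc a b,
      HasDerivWithinAt Z (-(A * Z s + Q s + Z s * Ahat s)) (Icc a b) s)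
    (hY : ∀ s ∈ Icc a b, HasDerivWithinAt Y (Ahat s * Y s) (Icc a b) s)
    (ht : t ∈ Icc a b) (hYt : IsUnit (Y t)) :
    Z t = NormedSpace.exp ((-t) • A)
      * ((∫ s in t..b, NormedSpace.exp (s • A) * Q s * Y s)
          + NormedSpace.exp (b • A) * Z b * Y b) * (Y t)⁻¹ := by
  set E : ℝ → Matrix ι ι ℝ := fun s => NormedSpace.exp (s • A)
  have hE : Continuous E :=
    continuous_iff_continuousAt.mpr fun s => (Matrix.hasDerivAt_exp_smul_const A s).continuousAt
  have hF : ∀ s ∈ Icc a b,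
      HasDerivWithinAt (fun u => E u * Z u * Y u) (-(E s * Q s * Y s)) (Icc a b) s := by
    intro s hs
    refine (((Matrix.hasDerivAt_exp_smul_const A s).hasDerivWithinAt.matrix_mul
      (hZ s hs)).matrix_mul (hY s hs)).congr_deriv ?_
    noncomm_ring
  have hsub : Icc t b ⊆ Icc a b := Icc_subset_Icc_left ht.1
  have hYc : ContinuousOn Y (Icc t b) := fun s hs => ((hY s (hsub hs)).continuousWithinAt).mono hsub
  have hFTC : ∫ s in t..b, -(E s * Q s * Y s) = E b * Z b * Y b - E t * Z t * Y t :=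
    integral_eq_sub_of_hasDerivAt_of_le ht.2
      (fun s hs => ((hF s (hsub hs)).continuousWithinAt).mono hsub)
      (fun s hs => (hF s (hsub (Ioo_subset_Icc_self hs))).hasDerivAt
        (Icc_mem_nhds (ht.1.trans_lt hs.1) hs.2))
      (by
        apply ContinuousOn.intervalIntegrable
        rw [uIcc_of_le ht.2]
        exact ((hE.continuousOn.mul (hQ.mono hsub)).mul hYc).neg)
  have hint : (∫ s in t..b, E s * Q s * Y s) + E b * Z b * Y b = E t * Z t * Y t := by
    rw [← neg_neg (∫ s in t..b, E s * Q s * Y s), ← intervalIntegral.integral_neg, hFTC]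
    abel
  rw [hint, ← mul_assoc, ← mul_assoc, Matrix.exp_neg_smul_mul_exp_smul, one_mul, mul_assoc,
    Matrix.mul_nonsing_inv _ ((Matrix.isUnit_iff_isUnit_det _).mp hYt), mul_one]

end

theorem stmt12_general {n m r : ℕ} (T : ℝ) (δ : ℝ)
    (A Q : Matrix (Fin n) (Fin n) ℝ)
    (Qhat : Matrix (Fin n) (Fin n) ℝ)
    (B S : Matrix (Fin n) (Fin m) ℝ)
    (R : Matrix (Fin m) (Fin m) ℝ)
    (σ : ℝ → Matrix (Fin n) (Fin r) ℝ) (hσ : ContinuousOn σ (Icc 0 T))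
    (Pmat Pmat' : ℝ → Matrix (Fin n) (Fin n) ℝ)
    (hPdiff : ∀ t ∈ Icc (0 : ℝ) T, HasDerivWithinAt Pmat (Pmat' t) (Icc 0 T) t)
    (hPT : Pmat T = Qhat)
    (hric : ∀ t ∈ Icc (0 : ℝ) T,
      Pmat' t + Pmat t * A + Aᵀ * Pmat t
        - (Pmat t * B + S) * R⁻¹ * (Bᵀ * Pmat t + Sᵀ) + Q
        + δ • (Pmat t * σ t * (σ t)ᵀ * Pmat t) = 0)
    (Ahat : ℝ → Matrix (Fin n) (Fin n) ℝ)
    (hAhat : ∀ t, Ahat t = A - B * R⁻¹ * (Sᵀ + Bᵀ * Pmat t) + δ • (σ t * (σ t)ᵀ * Pmat t))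
    (Qtilde : ℝ → Matrix (Fin n) (Fin n) ℝ)
    (hQtilde : ∀ t, Qtilde t = Q - S * R⁻¹ * (Sᵀ + Bᵀ * Pmat t))
    (Y : ℝ → Matrix (Fin n) (Fin n) ℝ)
    (hY : ∀ t ∈ Icc (0 : ℝ) T, HasDerivWithinAt Y (Ahat t * Y t) (Icc 0 T) t)
    (hY0 : Y 0 = 1)
    (Ztilde : ℝ → Matrix (Fin n) (Fin n) ℝ)
    (hZtilde : ∀ t, Ztilde t
      = NormedSpace.exp ((-t) • Aᵀ)
        * ((∫ s in t..T, NormedSpace.exp (s • Aᵀ) * Qtilde s * Y s)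
            + NormedSpace.exp (T • Aᵀ) * Qhat * Y T)
        * (Y t)⁻¹) :
    ∀ t ∈ Icc (0 : ℝ) T, Ztilde t = Pmat t := by
  intro t ht
  have hP : ContinuousOn Pmat (Icc 0 T) := fun s hs => (hPdiff s hs).continuousWithinAt
  have hAhat_cont : ContinuousOn Ahat (Icc 0 T) := by
    obtain rfl : Ahat = _ := funext hAhat
    fun_prop
  have hQtilde_cont : ContinuousOn Qtilde (Icc 0 T) := by
    obtain rfl : Qtilde = _ := funext hQtilde
    fun_prop
  have hsylvester : ∀ s ∈ Icc (0 : ℝ) T, HasDerivWithinAt Pmat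
      (-(Aᵀ * Pmat s + Qtilde s + Pmat s * Ahat s)) (Icc 0 T) s := fun s hs =>
    (hPdiff s hs).congr_deriv (by rw [hAhat, hQtilde]; exact sylvester_of_riccati (hric s hs))
  have hYt : IsUnit (Y t) := isUnit_of_hasDerivWithinAt_mul hAhat_cont hY (hY0 ▸ isUnit_one) ht
  rw [hZtilde, ← hPT]
  exact (eq_of_hasDerivWithinAt_sylvester Aᵀ hQtilde_cont hsylvester hY ht hYt).symm

/-- identification of the martingale-representation coefficient
with the Riccati solution: if `Π` solves the risk-sensitive Riccati equation
with `Π(T) = Q̂` and `Υ` is the fundamental matrix of `Â(t)`, then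
`Z̃(t) = e^{−Aᵀt}(∫ₜᵀ e^{Aᵀs} Q̃(s) Υ(s) ds + e^{AᵀT} Q̂ Υ(T)) Υ(t)⁻¹ = Π(t)`
on `[0,T]`. -/
theorem stmt12 {n m r : ℕ} (T : ℝ) (hT : 0 < T) (δ : ℝ) (hδ : 0 < δ)
    (A Q : Matrix (Fin n) (Fin n) ℝ) (hQsymm : Q.IsSymm)
    (Qhat : Matrix (Fin n) (Fin n) ℝ) (hQhatsymm : Qhat.IsSymm)
    (B S : Matrix (Fin n) (Fin m) ℝ)
    (R : Matrix (Fin m) (Fin m) ℝ) (hR : IsUnit R)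
    (σ : ℝ → Matrix (Fin n) (Fin r) ℝ) (hσ : ContinuousOn σ (Icc 0 T))
    (Pmat Pmat' : ℝ → Matrix (Fin n) (Fin n) ℝ)
    (hPdiff : ∀ t ∈ Icc (0 : ℝ) T, HasDerivWithinAt Pmat (Pmat' t) (Icc 0 T) t)
    (hP'cont : ContinuousOn Pmat' (Icc 0 T))
    (hPT : Pmat T = Qhat)
    (hric : ∀ t ∈ Icc (0 : ℝ) T,
      Pmat' t + Pmat t * A + Aᵀ * Pmat t
        - (Pmat t * B + S) * R⁻¹ * (Bᵀ * Pmat t + Sᵀ) + Q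
        + δ • (Pmat t * σ t * (σ t)ᵀ * Pmat t) = 0)
    (Ahat : ℝ → Matrix (Fin n) (Fin n) ℝ)
    (hAhat : ∀ t, Ahat t = A - B * R⁻¹ * (Sᵀ + Bᵀ * Pmat t) + δ • (σ t * (σ t)ᵀ * Pmat t))
    (Qtilde : ℝ → Matrix (Fin n) (Fin n) ℝ)
    (hQtilde : ∀ t, Qtilde t = Q - S * R⁻¹ * (Sᵀ + Bᵀ * Pmat t))
    (Y : ℝ → Matrix (Fin n) (Fin n) ℝ)
    (hY : ∀ t ∈ Icc (0 : ℝ) T, HasDerivWithinAt Y (Ahat t * Y t) (Icc 0 T) t)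
    (hY0 : Y 0 = 1)
    (Ztilde : ℝ → Matrix (Fin n) (Fin n) ℝ)
    (hZtilde : ∀ t, Ztilde t
      = NormedSpace.exp ((-t) • Aᵀ)
        * ((∫ s in t..T, NormedSpace.exp (s • Aᵀ) * Qtilde s * Y s)
            + NormedSpace.exp (T • Aᵀ) * Qhat * Y T)
        * (Y t)⁻¹) :
    ∀ t ∈ Icc (0 : ℝ) T, Ztilde t = Pmat t :=
  stmt12_general T δ A Q Qhat B S R σ hσ Pmat Pmat' hPdiff hPT hric Ahat hAhat Qtilde hQtilde Y hY
    hY0 Ztilde hZtilde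
end
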